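/- For x ∈ S(n+1) with image y = p(x) ∈ S(n) under the canonical projection, the number of cycles satisfies [x] = [y] + 1 if x fixes n+1 (equivalently x ∈ S(n) ⊂ S(n+1)), and [x] = [y] otherwise. -/

import Mathlib

/-!
Count cycles, fixed points included, as the parts of `Equiv.Perm.partition`, and move along
`finSuccEquivLast` to `Option (Fin n)`, where the last point becomes `none`. Two moves change
the count by exactly one: extending a permutation by a fixed point (`optionCongr`) adds a cycle,
and so does multiplying `f` by `swap x (f x)` when `f x ≠ x`, which splits `x` off its cycle as
a fixed point. Since `(removeNone σ).optionCongr = swap none (σ none) * σ`, a `σ` fixing `none`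
is the extension of its projection, and otherwise the extension of the projection is `σ` with
`none` split off, so `σ` and its projection have the same number of cycles.
-/

/-- The number of cycles of a permutation, counting fixed points as cycles. -/
def cycleCount {n : ℕ} (x : Equiv.Perm (Fin n)) : ℕ :=
  x.cycleType.card + (Finset.univ.filter fun i => x i = i).card

/-- The canonical projection `S(n+1) → S(n)`: remove the largest element from its cycle. -/
def proj {n : ℕ} (x : Equiv.Perm (Fin (n + 1))) : Equiv.Perm (Fin n) :=
  Equiv.removeNone (finSuccEquivLast.permCongr x)

open Finset

namespace Equiv.Perm

theorem optionCongr_eq_extendDomain {α : Type*} (σ : Perm α) :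
    σ.optionCongr = σ.extendDomain (optionIsSomeEquiv α).symm := by
  ext (_ | a)
  · simp [extendDomain_apply_not_subtype]
  · simp [extendDomain_apply_subtype]

theorem permCongr_eq_extendDomain {α β : Type*} (e : α ≃ β) (σ : Perm α) :
    e.permCongr σ = σ.extendDomain (e.trans (subtypeUnivEquiv fun _ => trivial).symm) := by
  ext b
  simp [extendDomain_apply_subtype, permCongr_apply, subtypeUnivEquiv]

variable {α : Type*} [DecidableEq α]

theorem disjoint_swap_swap_mul {f : Perm α} {x : α} (hffx : f (f x) = x) :
    (swap x (f x)).Disjoint (swap x (f x) * f) := by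
  intro y
  by_cases hy : y = x ∨ y = f x
  · right
    rcases hy with rfl | rfl <;> simp [hffx]
  · push Not at hy
    exact .inl (swap_apply_of_ne_of_ne hy.1 hy.2)

variable [Fintype α]

theorem card_parts_partition (σ : Perm α) :
    Multiset.card σ.partition.parts =
      Multiset.card σ.cycleType + (Fintype.card α - #σ.support) := by
  rw [parts_partition, Multiset.card_add, Multiset.card_replicate]

theorem card_cycleType_swap_mul {f : Perm α} {x : α} (hx : f x ≠ x) (hffx : f (f x) ≠ x) :
    Multiset.card (swap x (f x) * f).cycleType = Multiset.card f.cycleType := by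
  set c := f.cycleOf x
  have hc : c ∈ f.cycleFactorsFinset :=
    cycleOf_mem_cycleFactorsFinset_iff.mpr (mem_support.mpr hx)
  have hcx : c x = f x := cycleOf_apply_self f x
  have hccx : c (c x) ≠ x := by rwa [hcx, cycleOf_apply_apply_self]
  set r := f * c⁻¹
  have hrc : r.Disjoint c := disjoint_mul_inv_of_mem_cycleFactorsFinset hc
  have hf : f = c * r := by rw [← hrc.commute.eq, inv_mul_cancel_right]
  have hsc : (swap x (c x) * c).IsCycle := (isCycle_cycleOf f hx).swap_mul (hcx ▸ hx) hccx
  have hscr : (swap x (c x) * c).Disjoint r :=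
    hrc.symm.mono (by rw [support_swap_mul_eq c x hccx]; exact sdiff_subset) le_rfl
  rw [← hcx, hf, ← mul_assoc, hscr.cycleType_mul, hrc.symm.cycleType_mul, Multiset.card_add,
    Multiset.card_add, card_cycleType_eq_one.mpr hsc,
    card_cycleType_eq_one.mpr (isCycle_cycleOf f hx)]

theorem card_parts_partition_swap_mul {f : Perm α} {x : α} (hx : f x ≠ x) :
    Multiset.card (swap x (f x) * f).partition.parts = Multiset.card f.partition.parts + 1 := by
  have hle := card_le_univ f.support
  rw [card_parts_partition, card_parts_partition]
  by_cases hffx : f (f x) = x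
  · have hd := disjoint_swap_swap_mul hffx
    have hct : f.cycleType = (swap x (f x)).cycleType + (swap x (f x) * f).cycleType := by
      rw [← hd.cycleType_mul, swap_mul_self_mul]
    have hsupp : #f.support = #(swap x (f x)).support + #(swap x (f x) * f).support := by
      rw [← hd.card_support_mul, swap_mul_self_mul]
    rw [hct, (isCycle_swap hx.symm).cycleType, Multiset.card_add, Multiset.card_singleton]
    rw [card_support_swap hx.symm] at hsupp
    omega
  · have hsupp := card_sdiff_add_card_inter f.support {x}
    rw [← support_swap_mul_eq f x hffx, inter_singleton_of_mem (mem_support.mpr hx),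
      card_singleton] at hsupp
    rw [card_cycleType_swap_mul hx hffx]
    omega

theorem card_parts_partition_optionCongr (σ : Perm α) :
    Multiset.card (partition σ.optionCongr).parts = Multiset.card σ.partition.parts + 1 := by
  have hle := card_le_univ σ.support
  rw [card_parts_partition, card_parts_partition, optionCongr_eq_extendDomain,
    cycleType_extendDomain, card_support_extend_domain, Fintype.card_option]
  omega

theorem card_parts_partition_of_apply_none_eq {σ : Perm (Option α)} (h : σ none = none) :
    Multiset.card σ.partition.parts = Multiset.card (partition (removeNone σ)).parts + 1 := by
  have hσ : (removeNone σ).optionCongr = σ := by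
    rw [map_equiv_removeNone, h, swap_self, ← one_def, one_mul]
  rw [← card_parts_partition_optionCongr, hσ]

theorem card_parts_partition_of_apply_none_ne {σ : Perm (Option α)} (h : σ none ≠ none) :
    Multiset.card σ.partition.parts = Multiset.card (partition (removeNone σ)).parts := by
  have hsplit := card_parts_partition_swap_mul h
  rw [← map_equiv_removeNone, card_parts_partition_optionCongr] at hsplit
  omega

theorem parts_partition_permCongr {β : Type*} [DecidableEq β] [Fintype β] (e : α ≃ β)
    (σ : Perm α) : (e.permCongr σ).partition.parts = σ.partition.parts := by
  rw [parts_partition, parts_partition, permCongr_eq_extendDomain, cycleType_extendDomain,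
    card_support_extend_domain, Fintype.card_congr e]

end Equiv.Perm

theorem cycleCount_eq_card_parts_partition {n : ℕ} (x : Equiv.Perm (Fin n)) :
    cycleCount x = Multiset.card x.partition.parts := by
  rw [cycleCount, Equiv.Perm.card_parts_partition, ← card_compl]
  congr 2
  ext i
  simp

/-- For `x ∈ S(n+1)` with `y = p(x)` its canonical projection: `[x] = [y] + 1` if `x`
fixes the last element, and `[x] = [y]` otherwise. -/
theorem stmt9 (n : ℕ) (x : Equiv.Perm (Fin (n + 1))) :
    (x (Fin.last n) = Fin.last n → cycleCount x = cycleCount (proj x) + 1) ∧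
    (x (Fin.last n) ≠ Fin.last n → cycleCount x = cycleCount (proj x)) := by
  have hfix : finSuccEquivLast.permCongr x none = none ↔ x (Fin.last n) = Fin.last n := by
    rw [Equiv.permCongr_apply, finSuccEquivLast_symm_none, ← Equiv.eq_symm_apply,
      finSuccEquivLast_symm_none]
  rw [proj, cycleCount_eq_card_parts_partition, cycleCount_eq_card_parts_partition,
    ← Equiv.Perm.parts_partition_permCongr finSuccEquivLast x]
  exact ⟨fun h => Equiv.Perm.card_parts_partition_of_apply_none_eq (hfix.mpr h),
    fun h => Equiv.Perm.card_parts_partition_of_apply_none_ne (mt hfix.mp h)⟩
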